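/- Let 1 ≤ m ≤ n, let f : (ℝᵈ)ⁿ → ℝᵈ and g : ℝᵈ → ℝ^ℓ be smooth, fix x₁, …, xₙ ∈ ℝᵈ, and set x = (x₁, …, xₙ). Suppose that (i) for each 0 ≤ k ≤ m−1 the derivative Dg at the point (f ∘ (σf)^{∘k})(x) is an injective linear map ℝᵈ → ℝ^ℓ, and (ii) the linear map L : ℝᵈ → (ℝᵈ)ᵐ given by L v = ( ∂f/∂xₙ(x) v, ∂f/∂x_{n−1}((σf)(x)) v, …, ∂f/∂x_{n−m+1}((σf)^{∘(m−1)}(x)) v ) is injective. Then the Fréchet derivative at xₙ of the map z ↦ 𝒜ₘ(f,g)(x₁, …, x_{n−1}, z) from ℝᵈ to (ℝ^ℓ)ᵐ is injective, i.e., this map is an immersion at xₙ. -/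

import Mathlib

/-- The shift of `f : Xⁿ⁺¹ → X`: `(σf)(x₁, …, xₙ₊₁) = (x₂, …, xₙ₊₁, f(x₁, …, xₙ₊₁))`. -/
def shift {X : Type*} {n : ℕ} (f : (Fin (n + 1) → X) → X) (x : Fin (n + 1) → X) :
    Fin (n + 1) → X :=
  Fin.snoc (fun i : Fin n => x i.succ) (f x)

/-- The `m`-th autoregression of `f` with measurements by `g`: its `k`-th component
(0-indexed) is `g ∘ f ∘ (σf)^{∘k}`. -/
def autoreg {X Y : Type*} {n : ℕ} (m : ℕ) (f : (Fin (n + 1) → X) → X) (g : X → Y)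
    (x : Fin (n + 1) → X) : Fin m → Y :=
  fun k => g (f ((shift f)^[(k : ℕ)] x))

/-- `∂f/∂x_k(p)`: the Fréchet derivative at `p k` of the map obtained from `f` by
fixing all coordinates except the `k`-th. -/
noncomputable def partialDeriv {d N : ℕ}
    (f : (Fin N → EuclideanSpace ℝ (Fin d)) → EuclideanSpace ℝ (Fin d)) (k : Fin N)
    (p : Fin N → EuclideanSpace ℝ (Fin d)) :
    EuclideanSpace ℝ (Fin d) →L[ℝ] EuclideanSpace ℝ (Fin d) :=
  fderiv ℝ (fun z => f (Function.update p k z)) (p k)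

lemma contDiff_shift {d n : ℕ}
    {f : (Fin (n + 1) → EuclideanSpace ℝ (Fin d)) → EuclideanSpace ℝ (Fin d)}
    (hf : ContDiff ℝ (⊤ : ℕ∞) f) : ContDiff ℝ (⊤ : ℕ∞) (shift f) := by
  apply contDiff_pi.2
  intro j
  induction j using Fin.lastCases with
  | last => simpa [shift] using hf
  | cast i =>
    simp only [shift, Fin.snoc_castSucc]
    exact contDiff_apply ℝ (EuclideanSpace ℝ (Fin d)) i.succ

lemma clm_pi_single_apply {d N : ℕ} (j : Fin N) (v : EuclideanSpace ℝ (Fin d)) :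
    (ContinuousLinearMap.pi
      (Pi.single (M := fun _ : Fin N => EuclideanSpace ℝ (Fin d) →L[ℝ] EuclideanSpace ℝ (Fin d))
        j (ContinuousLinearMap.id ℝ (EuclideanSpace ℝ (Fin d))))) v
      = Pi.single j v := by
  funext j'
  rcases eq_or_ne j' j with h | h
  · subst h; simp
  · simp [Pi.single_eq_of_ne h]

lemma partialDeriv_apply' {d N : ℕ}
    {f : (Fin N → EuclideanSpace ℝ (Fin d)) → EuclideanSpace ℝ (Fin d)}
    (hf : Differentiable ℝ f) (k : Fin N) (p : Fin N → EuclideanSpace ℝ (Fin d))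
    (v : EuclideanSpace ℝ (Fin d)) :
    partialDeriv f k p v = fderiv ℝ f p (Pi.single k v) := by
  have hup := hasFDerivAt_update (𝕜 := ℝ) (i := k) p (p k)
  have h2 : fderiv ℝ (fun z => f (Function.update p k z)) (p k)
      = (fderiv ℝ f p).comp (ContinuousLinearMap.pi
          (Pi.single k (ContinuousLinearMap.id ℝ (EuclideanSpace ℝ (Fin d))))) := by
    have h3 := fderiv_comp (𝕜 := ℝ) (p k) (g := f) (f := Function.update p k)
      (hf _) hup.differentiableAt
    rw [show (f ∘ Function.update p k) = (fun z => f (Function.update p k z)) from rfl] at h3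
    rw [h3, hup.fderiv, Function.update_eq_self]
  rw [partialDeriv, h2]
  simp only [ContinuousLinearMap.comp_apply, clm_pi_single_apply]

/-- For `1 ≤ m ≤ n` and smooth `f`, `g`: if (i) `Dg` is injective at each of the points
`(f ∘ (σf)^{∘k})(x)`, `0 ≤ k ≤ m − 1`, and (ii) the map
`L v = (∂f/∂xₙ(x) v, ∂f/∂x_{n−1}((σf)(x)) v, …, ∂f/∂x_{n−m+1}((σf)^{∘(m−1)}(x)) v)`
is injective, then `z ↦ 𝒜ₘ(f, g)(x₁, …, x_{n−1}, z)` is an immersion at `xₙ`, i.e. its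
Fréchet derivative at `xₙ` is injective. (Here the context window has length `n + 1`.) -/
theorem autoreg_immersion {d l n : ℕ} (m : ℕ) (hm1 : 1 ≤ m) (hmn : m ≤ n + 1)
    (f : (Fin (n + 1) → EuclideanSpace ℝ (Fin d)) → EuclideanSpace ℝ (Fin d))
    (g : EuclideanSpace ℝ (Fin d) → EuclideanSpace ℝ (Fin l))
    (hf : ContDiff ℝ (⊤ : ℕ∞) f) (hg : ContDiff ℝ (⊤ : ℕ∞) g)
    (xs : Fin n → EuclideanSpace ℝ (Fin d)) (xn : EuclideanSpace ℝ (Fin d)) :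
    let x : Fin (n + 1) → EuclideanSpace ℝ (Fin d) := Fin.snoc xs xn
    (∀ k : ℕ, k < m → Function.Injective (fderiv ℝ g (f ((shift f)^[k] x)))) →
    Function.Injective
      (ContinuousLinearMap.pi fun k : Fin m =>
        partialDeriv f ⟨n - (k : ℕ), by omega⟩ ((shift f)^[(k : ℕ)] x)) →
    Function.Injective (fderiv ℝ (fun z => autoreg m f g (Fin.snoc xs z)) xn) := by
  intro x hgInj hL
  set Φ : ℕ → (EuclideanSpace ℝ (Fin d) → (Fin (n + 1) → EuclideanSpace ℝ (Fin d))) :=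
    fun k z => (shift f)^[k] (Fin.snoc xs z) with hPhidef
  have hfd : Differentiable ℝ f := hf.differentiable (by simp)
  have hgd : Differentiable ℝ g := hg.differentiable (by simp)
  have hΦc : ∀ k, ContDiff ℝ (⊤ : ℕ∞) (Φ k) := by
    intro k
    induction k with
    | zero =>
      simp only [hPhidef, Function.iterate_zero, id_eq]
      apply contDiff_pi.2
      intro j
      induction j using Fin.lastCases with
      | last => simp only [Fin.snoc_last]; exact contDiff_id
      | cast i => simpa using contDiff_const
    | succ k ih =>
      have h : Φ (k + 1) = shift f ∘ Φ k := by
        funext z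
        simp [hPhidef, Function.iterate_succ_apply']
      rw [h]
      exact (contDiff_shift hf).comp ih
  have hΦd : ∀ k, Differentiable ℝ (Φ k) := fun k => (hΦc k).differentiable (by simp)
  have hΦdj : ∀ k (j : Fin (n + 1)), Differentiable ℝ (fun z => Φ k z j) :=
    fun k j => (differentiable_apply (𝕜 := ℝ) (F' := fun _ : Fin (n + 1) => EuclideanSpace ℝ (Fin d)) j).comp (hΦd k)
  have hΦpi : ∀ k, fderiv ℝ (Φ k) xn =
      ContinuousLinearMap.pi (fun j => fderiv ℝ (fun z => Φ k z j) xn) :=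
    fun k => fderiv_pi (fun j => (hΦdj k j) xn)
  have hcomp2 : ∀ k : ℕ, fderiv ℝ (fun z => f (Φ k z)) xn =
      (fderiv ℝ f (Φ k xn)).comp (fderiv ℝ (Φ k) xn) :=
    fun k => fderiv_comp (𝕜 := ℝ) xn (hfd _) ((hΦd k) xn)
  have hcomp1 : ∀ k : ℕ, fderiv ℝ (fun z => g (f (Φ k z))) xn =
      (fderiv ℝ g (f (Φ k xn))).comp (fderiv ℝ (fun z => f (Φ k z)) xn) :=
    fun k => fderiv_comp (𝕜 := ℝ) xn (hgd _) ((hfd.comp (hΦd k)) xn)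
  have hΦx : ∀ k : ℕ, Φ k xn = (shift f)^[k] x := fun k => rfl
  -- the big map and its derivative, componentwise
  have hBpi : fderiv ℝ (fun z => autoreg m f g (Fin.snoc xs z)) xn =
      ContinuousLinearMap.pi (fun k : Fin m => fderiv ℝ (fun z => g (f (Φ (k : ℕ) z))) xn) := by
    exact fderiv_pi (fun k => ((hgd.comp (hfd.comp (hΦd (k : ℕ)))) xn))
  refine (injective_iff_map_eq_zero _).2 ?_
  intro v hv
  -- each measured component of the derivative vanishes on v
  have hv' : ∀ k : Fin m, fderiv ℝ g (f (Φ (k : ℕ) xn))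
      (fderiv ℝ (fun z => f (Φ (k : ℕ) z)) xn v) = 0 := by
    intro k
    have h1 : fderiv ℝ (fun z => g (f (Φ (k : ℕ) z))) xn v = 0 := by
      rw [hBpi] at hv
      exact congrFun hv k
    rw [hcomp1 (k : ℕ)] at h1
    exact h1
  -- hence each inner derivative vanishes on v
  have hz : ∀ k : ℕ, k < m → fderiv ℝ (fun z => f (Φ k z)) xn v = 0 := by
    intro k hk
    apply hgInj k hk
    rw [map_zero]
    exact hv' ⟨k, hk⟩
  -- the key inductive claim
  have claim : ∀ k : ℕ, ∀ hk : k < m,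
      fderiv ℝ (Φ k) xn v = Pi.single (⟨n - k, by omega⟩ : Fin (n + 1)) v := by
    intro k
    induction k with
    | zero =>
      intro _
      have h0 : Φ 0 = Function.update (Fin.snoc xs xn : Fin (n + 1) → EuclideanSpace ℝ (Fin d)) (Fin.last n) := by
        funext z j
        induction j using Fin.lastCases with
        | last => simp [hPhidef]
        | cast i => simp [hPhidef, Function.update_of_ne (Fin.castSucc_lt_last i).ne]
      have hlast : (⟨n - 0, by omega⟩ : Fin (n + 1)) = Fin.last n := by
        ext; simp
      rw [h0, fderiv_update, hlast, clm_pi_single_apply]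
    | succ k ih =>
      intro hk
      have hk' : k < m := by omega
      have ihk := ih hk'
      have hkn : k + 1 ≤ n := by omega
      have hrw : Φ (k + 1) =
          fun z => Fin.snoc (fun i : Fin n => Φ k z i.succ) (f (Φ k z)) := by
        funext z
        rw [show Φ (k + 1) z = shift f (Φ k z) from Function.iterate_succ_apply' _ _ _]
        rfl
      have hdiffj : ∀ j : Fin (n + 1), DifferentiableAt ℝ
          (fun z => (Fin.snoc (fun i : Fin n => Φ k z i.succ) (f (Φ k z)) : Fin (n + 1) → EuclideanSpace ℝ (Fin d)) j) xn := by
        intro j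
        induction j using Fin.lastCases with
        | last =>
          simp only [Fin.snoc_last]
          exact (hfd.comp (hΦd k)) xn
        | cast i =>
          simp only [Fin.snoc_castSucc]
          exact (hΦdj k i.succ) xn
      rw [hrw, fderiv_pi hdiffj]
      funext j
      rw [ContinuousLinearMap.pi_apply]
      induction j using Fin.lastCases with
      | last =>
        simp only [Fin.snoc_last]
        rw [hz k hk']
        have : (⟨n - (k + 1), by omega⟩ : Fin (n + 1)) ≠ Fin.last n := by
          simp only [ne_eq, Fin.ext_iff, Fin.val_last]
          omega
        rw [Pi.single_eq_of_ne (Ne.symm this)]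
      | cast i =>
        simp only [Fin.snoc_castSucc]
        have hcv : fderiv ℝ (fun z => Φ k z i.succ) xn v
            = fderiv ℝ (Φ k) xn v i.succ := by
          rw [hΦpi k]; rfl
        rw [hcv, ihk]
        by_cases hcase : (i : ℕ) = n - (k + 1)
        · have e1 : i.succ = (⟨n - k, by omega⟩ : Fin (n + 1)) := by
            simp only [Fin.ext_iff, Fin.val_succ]
            omega
          have e2 : i.castSucc = (⟨n - (k + 1), by omega⟩ : Fin (n + 1)) := by
            simp only [Fin.ext_iff, Fin.coe_castSucc]
            omega
          rw [e1, e2, Pi.single_eq_same, Pi.single_eq_same]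
        · have e1 : i.succ ≠ (⟨n - k, by omega⟩ : Fin (n + 1)) := by
            simp only [ne_eq, Fin.ext_iff, Fin.val_succ]
            omega
          have e2 : i.castSucc ≠ (⟨n - (k + 1), by omega⟩ : Fin (n + 1)) := by
            simp only [ne_eq, Fin.ext_iff, Fin.coe_castSucc]
            omega
          rw [Pi.single_eq_of_ne e1, Pi.single_eq_of_ne e2]
  -- conclude: all partial derivatives kill v
  have hpart : ∀ k : Fin m,
      partialDeriv f ⟨n - (k : ℕ), by omega⟩ ((shift f)^[(k : ℕ)] x) v = 0 := by
    intro k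
    rw [partialDeriv_apply' hfd]
    rw [← claim (k : ℕ) k.2, ← hΦx (k : ℕ)]
    have := hcomp2 (k : ℕ)
    have h4 : fderiv ℝ f (Φ (k : ℕ) xn) (fderiv ℝ (Φ (k : ℕ)) xn v)
        = fderiv ℝ (fun z => f (Φ (k : ℕ) z)) xn v := by
      rw [this]; rfl
    rw [h4, hz (k : ℕ) k.2]
  apply hL
  rw [map_zero]
  funext k
  rw [ContinuousLinearMap.pi_apply, hpart k]
  rfl
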